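/- Let n ≥ 6 be an integer. There exists a unique φ ∈ (π/4, π/2) with cos φ = ((2n−11)·√(2n−3))/((2n−5)·√(5(n−3))) and sin φ = ((2n−1)·√(3(n−4)))/((2n−5)·√(5(n−3))). With this φ, the three real roots of the cubic g₃(t) := 8(2n−1)(2n−3)(2n−5)·t³ + 12(n−3)(2n−3)(2n−5)·t² + 6(n−3)(n−4)(2n−5)·t + (n−3)(n−4)(n−5), listed in increasing order t₁ < t₂ < t₃, are t₁ = −(n−3)/(2(2n−1)) − (√(5(n−3))/((2n−1)·√(2n−3)))·cos(φ/3 − π/3), t₂ = −(n−3)/(2(2n−1)) − (√(5(n−3))/((2n−1)·√(2n−3)))·cos(φ/3 + π/3), and t₃ = −(n−3)/(2(2n−1)) + (√(5(n−3))/((2n−1)·√(2n−3)))·cos(φ/3). -/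

import Mathlib

open Real

/-- The cubic `g₃(t)`. -/
noncomputable def g3 (n : ℕ) (t : ℝ) : ℝ :=
  8 * (2 * (n : ℝ) - 1) * (2 * (n : ℝ) - 3) * (2 * (n : ℝ) - 5) * t ^ 3 +
  12 * ((n : ℝ) - 3) * (2 * (n : ℝ) - 3) * (2 * (n : ℝ) - 5) * t ^ 2 +
  6 * ((n : ℝ) - 3) * ((n : ℝ) - 4) * (2 * (n : ℝ) - 5) * t +
  ((n : ℝ) - 3) * ((n : ℝ) - 4) * ((n : ℝ) - 5)

/-!
Substituting `t = m + r u`, with `m = -(n-3)/(2(2n-1))` and `r² = 5(n-3)/((2n-1)²(2n-3))`, turns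
`g₃` into a positive multiple of the Chebyshev cubic `4u³ - 3u - cos φ`, because `r cos φ` is the
rational number `(2n-11)/((2n-1)(2n-5))`. By the triple-angle formula the roots of the Chebyshev
cubic are `cos (φ/3)` and `cos (φ/3 ± 2π/3) = -cos (φ/3 ∓ π/3)`. The angle `φ` itself exists and is
unique because the prescribed cosine and sine are positive, their squares sum to `1`, and the
cosine is the smaller of the two.
-/

theorem existsUnique_mem_Ioo_cos_eq_sin_eq {c s : ℝ} (hc : 0 < c) (hcs : c < s)
    (h : c ^ 2 + s ^ 2 = 1) :
    ∃! φ : ℝ, φ ∈ Set.Ioo (π / 4) (π / 2) ∧ cos φ = c ∧ sin φ = s := by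
  have hc2 : c ^ 2 < 1 / 2 := by nlinarith
  have hc_lt : c < √2 / 2 := by
    rw [lt_div_iff₀ two_pos, lt_sqrt (by positivity)]; linarith
  refine ⟨arccos c, ⟨⟨?_, arccos_lt_pi_div_two.2 hc⟩, cos_arccos (by linarith) (by nlinarith), ?_⟩,
    ?_⟩
  · exact lt_of_not_ge (mt arccos_le_pi_div_four.1 (not_le.2 hc_lt))
  · rw [sin_arccos, show 1 - c ^ 2 = s ^ 2 by linarith, sqrt_sq (by linarith)]
  · rintro φ ⟨⟨hφ₁, hφ₂⟩, rfl, -⟩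
    exact (arccos_cos (by linarith) (by linarith)).symm

theorem depressed_cubic_eq_prod_cos (m r ψ t : ℝ) :
    4 * (t - m) ^ 3 - 3 * r ^ 2 * (t - m) - r ^ 3 * cos (3 * ψ) =
      4 * (t - (m - r * cos (ψ - π / 3))) * (t - (m - r * cos (ψ + π / 3))) *
        (t - (m + r * cos ψ)) := by
  rw [cos_three_mul, cos_sub, cos_add, cos_pi_div_three, sin_pi_div_three]
  linear_combination (3 * r ^ 2 * (t - m) - 3 * r ^ 3 * cos ψ) * sin_sq_add_cos_sq ψ
    + (r ^ 2 * sin ψ ^ 2 * (t - m - r * cos ψ)) * sq_sqrt (show (0 : ℝ) ≤ 3 by norm_num)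

theorem cos_add_pi_div_three_lt_cos_sub_pi_div_three {ψ : ℝ} (h₀ : 0 < ψ) (hπ : ψ < π) :
    cos (ψ + π / 3) < cos (ψ - π / 3) := by
  have : cos (ψ - π / 3) - cos (ψ + π / 3) = √3 * sin ψ := by
    rw [cos_sub, cos_add, sin_pi_div_three]; ring
  nlinarith [sin_pos_of_pos_of_lt_pi h₀ hπ, sqrt_pos.2 (show (0 : ℝ) < 3 by norm_num)]

theorem neg_cos_add_pi_div_three_lt_cos {ψ : ℝ} (h₀ : -(2 * π / 3) < ψ) (h₁ : ψ < π / 3) :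
    -cos (ψ + π / 3) < cos ψ := by
  have : cos ψ + cos (ψ + π / 3) = 2 * cos (ψ + π / 6) * cos (π / 6) := by
    rw [cos_add_cos, show (ψ + (ψ + π / 3)) / 2 = ψ + π / 6 by ring,
      show (ψ - (ψ + π / 3)) / 2 = -(π / 6) by ring, cos_neg]
  have h₂ : 0 < cos (ψ + π / 6) := cos_pos_of_mem_Ioo ⟨by linarith, by linarith⟩
  have h₃ : 0 < cos (π / 6) := cos_pos_of_mem_Ioo ⟨by linarith [pi_pos], by linarith [pi_pos]⟩
  nlinarith

noncomputable def g3CosPhi (n : ℕ) : ℝ :=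
  (2 * (n : ℝ) - 11) * √(2 * (n : ℝ) - 3) / ((2 * (n : ℝ) - 5) * √(5 * ((n : ℝ) - 3)))

noncomputable def g3SinPhi (n : ℕ) : ℝ :=
  (2 * (n : ℝ) - 1) * √(3 * ((n : ℝ) - 4)) / ((2 * (n : ℝ) - 5) * √(5 * ((n : ℝ) - 3)))

noncomputable def g3Center (n : ℕ) : ℝ := -(((n : ℝ) - 3) / (2 * (2 * (n : ℝ) - 1)))

noncomputable def g3Radius (n : ℕ) : ℝ :=
  √(5 * ((n : ℝ) - 3)) / ((2 * (n : ℝ) - 1) * √(2 * (n : ℝ) - 3))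

section

variable {n : ℕ}

theorem g3CosPhi_pos (hn : (6 : ℝ) ≤ n) : 0 < g3CosPhi n := by
  have h₃ : 0 < √(2 * (n : ℝ) - 3) := sqrt_pos.2 (by linarith)
  have h₅ : 0 < √(5 * ((n : ℝ) - 3)) := sqrt_pos.2 (by linarith)
  exact div_pos (mul_pos (by linarith) h₃) (mul_pos (by linarith) h₅)

theorem g3CosPhi_sq (hn : (6 : ℝ) ≤ n) :
    g3CosPhi n ^ 2 = (2 * (n : ℝ) - 11) ^ 2 * (2 * n - 3) / ((2 * n - 5) ^ 2 * (5 * (n - 3))) := by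
  rw [g3CosPhi, div_pow, mul_pow, mul_pow, sq_sqrt (by linarith), sq_sqrt (by linarith)]

theorem g3SinPhi_sq (hn : (6 : ℝ) ≤ n) :
    g3SinPhi n ^ 2 = (2 * (n : ℝ) - 1) ^ 2 * (3 * (n - 4)) / ((2 * n - 5) ^ 2 * (5 * (n - 3))) := by
  rw [g3SinPhi, div_pow, mul_pow, mul_pow, sq_sqrt (by linarith), sq_sqrt (by linarith)]

theorem g3CosPhi_sq_add_g3SinPhi_sq (hn : (6 : ℝ) ≤ n) :
    g3CosPhi n ^ 2 + g3SinPhi n ^ 2 = 1 := by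
  have : 2 * (n : ℝ) - 5 ≠ 0 := by linarith
  have : (n : ℝ) - 3 ≠ 0 := by linarith
  rw [g3CosPhi_sq hn, g3SinPhi_sq hn]
  field_simp
  ring

theorem g3CosPhi_lt_g3SinPhi (hn : (6 : ℝ) ≤ n) : g3CosPhi n < g3SinPhi n := by
  have hsin : 0 ≤ g3SinPhi n :=
    div_nonneg (mul_nonneg (by linarith) (sqrt_nonneg _)) (mul_nonneg (by linarith) (sqrt_nonneg _))
  refine lt_of_pow_lt_pow_left₀ 2 hsin ?_
  rw [g3CosPhi_sq hn, g3SinPhi_sq hn, div_lt_div_iff_of_pos_right (by nlinarith)]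
  nlinarith

theorem g3Radius_pos (hn : (6 : ℝ) ≤ n) : 0 < g3Radius n := by
  have h₃ : 0 < √(2 * (n : ℝ) - 3) := sqrt_pos.2 (by linarith)
  have h₅ : 0 < √(5 * ((n : ℝ) - 3)) := sqrt_pos.2 (by linarith)
  exact div_pos h₅ (mul_pos (by linarith) h₃)

theorem g3Radius_sq (hn : (6 : ℝ) ≤ n) :
    g3Radius n ^ 2 = 5 * ((n : ℝ) - 3) / ((2 * n - 1) ^ 2 * (2 * n - 3)) := by
  rw [g3Radius, div_pow, mul_pow, sq_sqrt (by linarith), sq_sqrt (by linarith)]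

theorem g3Radius_mul_g3CosPhi (hn : (6 : ℝ) ≤ n) :
    g3Radius n * g3CosPhi n = (2 * (n : ℝ) - 11) / ((2 * n - 1) * (2 * n - 5)) := by
  have : 0 < √(2 * (n : ℝ) - 3) := sqrt_pos.2 (by linarith)
  have : 0 < √(5 * ((n : ℝ) - 3)) := sqrt_pos.2 (by linarith)
  have : 0 < 2 * (n : ℝ) - 1 := by linarith
  have : 0 < 2 * (n : ℝ) - 5 := by linarith
  rw [g3Radius, g3CosPhi, div_mul_div_comm, div_eq_div_iff (by positivity) (by positivity)]
  ring

theorem g3_eq_depressed (hn : (6 : ℝ) ≤ n) {φ : ℝ} (hcos : cos φ = g3CosPhi n) (t : ℝ) :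
    g3 n t = 2 * (2 * (n : ℝ) - 1) * (2 * n - 3) * (2 * n - 5) *
      (4 * (t - g3Center n) ^ 3 - 3 * g3Radius n ^ 2 * (t - g3Center n) -
        g3Radius n ^ 3 * cos φ) := by
  have : 2 * (n : ℝ) - 1 ≠ 0 := by linarith
  have : 2 * (n : ℝ) - 3 ≠ 0 := by linarith
  have : 2 * (n : ℝ) - 5 ≠ 0 := by linarith
  rw [show g3Radius n ^ 3 * cos φ = g3Radius n ^ 2 * (g3Radius n * cos φ) by ring, hcos,
    g3Radius_mul_g3CosPhi hn, g3Radius_sq hn, g3, g3Center]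
  field_simp
  ring

end

theorem stmt17 (n : ℕ) (hn : 6 ≤ n) :
    (∃! φ : ℝ, φ ∈ Set.Ioo (π / 4) (π / 2) ∧
      Real.cos φ =
        (2 * (n : ℝ) - 11) * Real.sqrt (2 * (n : ℝ) - 3) /
          ((2 * (n : ℝ) - 5) * Real.sqrt (5 * ((n : ℝ) - 3))) ∧
      Real.sin φ =
        (2 * (n : ℝ) - 1) * Real.sqrt (3 * ((n : ℝ) - 4)) /
          ((2 * (n : ℝ) - 5) * Real.sqrt (5 * ((n : ℝ) - 3)))) ∧
    (∀ φ : ℝ, φ ∈ Set.Ioo (π / 4) (π / 2) →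
      Real.cos φ =
        (2 * (n : ℝ) - 11) * Real.sqrt (2 * (n : ℝ) - 3) /
          ((2 * (n : ℝ) - 5) * Real.sqrt (5 * ((n : ℝ) - 3))) →
      Real.sin φ =
        (2 * (n : ℝ) - 1) * Real.sqrt (3 * ((n : ℝ) - 4)) /
          ((2 * (n : ℝ) - 5) * Real.sqrt (5 * ((n : ℝ) - 3))) →
      ∀ t1 t2 t3 : ℝ,
        t1 = -(((n : ℝ) - 3) / (2 * (2 * (n : ℝ) - 1))) -
          Real.sqrt (5 * ((n : ℝ) - 3)) / ((2 * (n : ℝ) - 1) * Real.sqrt (2 * (n : ℝ) - 3)) *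
            Real.cos (φ / 3 - π / 3) →
        t2 = -(((n : ℝ) - 3) / (2 * (2 * (n : ℝ) - 1))) -
          Real.sqrt (5 * ((n : ℝ) - 3)) / ((2 * (n : ℝ) - 1) * Real.sqrt (2 * (n : ℝ) - 3)) *
            Real.cos (φ / 3 + π / 3) →
        t3 = -(((n : ℝ) - 3) / (2 * (2 * (n : ℝ) - 1))) +
          Real.sqrt (5 * ((n : ℝ) - 3)) / ((2 * (n : ℝ) - 1) * Real.sqrt (2 * (n : ℝ) - 3)) *
            Real.cos (φ / 3) →
        t1 < t2 ∧ t2 < t3 ∧ (∀ t : ℝ, g3 n t = 0 ↔ t = t1 ∨ t = t2 ∨ t = t3)) := by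
  have hn' : (6 : ℝ) ≤ n := by exact_mod_cast hn
  refine ⟨existsUnique_mem_Ioo_cos_eq_sin_eq (g3CosPhi_pos hn') (g3CosPhi_lt_g3SinPhi hn')
    (g3CosPhi_sq_add_g3SinPhi_sq hn'), ?_⟩
  intro φ ⟨hφ₀, hφ₁⟩ (hcos : cos φ = g3CosPhi n) _ t1 t2 t3
    (ht1 : t1 = g3Center n - g3Radius n * cos (φ / 3 - π / 3))
    (ht2 : t2 = g3Center n - g3Radius n * cos (φ / 3 + π / 3))
    (ht3 : t3 = g3Center n + g3Radius n * cos (φ / 3))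
  have hr := g3Radius_pos hn'
  have hK : 2 * (2 * (n : ℝ) - 1) * (2 * n - 3) * (2 * n - 5) ≠ 0 :=
    (mul_pos (mul_pos (mul_pos two_pos (by linarith)) (by linarith)) (by linarith)).ne'
  have hfactor (t : ℝ) : g3 n t =
      2 * (2 * (n : ℝ) - 1) * (2 * n - 3) * (2 * n - 5) * (4 * (t - t1) * (t - t2) * (t - t3)) := by
    rw [g3_eq_depressed hn' hcos, show φ = 3 * (φ / 3) by ring, depressed_cubic_eq_prod_cos,
      ht1, ht2, ht3]
  refine ⟨?_, ?_, fun t => ?_⟩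
  · rw [ht1, ht2]
    exact sub_lt_sub_left (mul_lt_mul_of_pos_left
      (cos_add_pi_div_three_lt_cos_sub_pi_div_three (by linarith) (by linarith)) hr) _
  · have := mul_lt_mul_of_pos_left
      (neg_cos_add_pi_div_three_lt_cos (ψ := φ / 3) (by linarith) (by linarith)) hr
    rw [ht2, ht3]
    linarith
  · rw [hfactor, mul_eq_zero_iff_left hK]
    simp only [mul_eq_zero, four_ne_zero, false_or, sub_eq_zero, or_assoc]
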